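/- arXiv:2106.14848 — 2 statements merged into one kernel-verified Lean document; each statement's English description precedes it below -/
import Mathlib

section
/- For every positive integer k and every positive integer M, there exists a finite simple connected graph G (with at least 2 vertices) such that dim_k(G) ≥ M · γ_k(G); that is, the ratio dim_k(G)/γ_k(G) can be arbitrarily large. -/
open SimpleGraph Finset

/-- `D` is a distance-`k` dominating set of `G`: every vertex outside `D` is within
distance `k` of some vertex of `D`. -/
def IsKDomSet {V : Type*} (G : SimpleGraph V) (k : ℕ) (D : Finset V) : Prop :=
  ∀ u : V, u ∉ D → ∃ w ∈ D, G.dist u w ≤ k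

/-- `R` is a distance-`k` resolving set of `G`: any two distinct vertices are
distinguished by the truncated distance `d_k(x,y) = min (d(x,y)) (k+1)` to some vertex of `R`. -/
def IsKResSet {V : Type*} (G : SimpleGraph V) (k : ℕ) (R : Finset V) : Prop :=
  ∀ x y : V, x ≠ y → ∃ z ∈ R, min (G.dist x z) (k + 1) ≠ min (G.dist y z) (k + 1)

/-- The distance-`k` domination number `γ_k(G)`. -/
noncomputable def kdom {V : Type*} (G : SimpleGraph V) (k : ℕ) : ℕ :=
  sInf {m : ℕ | ∃ D : Finset V, IsKDomSet G k D ∧ D.card = m}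

/-- The distance-`k` dimension `dim_k(G)`. -/
noncomputable def kdim {V : Type*} (G : SimpleGraph V) (k : ℕ) : ℕ :=
  sInf {m : ℕ | ∃ R : Finset V, IsKResSet G k R ∧ R.card = m}

/-- The distance-`k` location-domination number `γ_L^k(G)`. -/
noncomputable def kld {V : Type*} (G : SimpleGraph V) (k : ℕ) : ℕ :=
  sInf {m : ℕ | ∃ S : Finset V, IsKDomSet G k S ∧ IsKResSet G k S ∧ S.card = m}

/-!
The star `K_{1,n+1}` does it. Its centre alone is a distance-`k` dominating set, so `γ_k ≤ 1`.
Two leaves have the same distance to every third vertex (1 to the centre, 2 to any other leaf),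
so no vertex other than themselves tells them apart: a distance-`k` resolving set contains all
leaves but at most one, hence `dim_k ≥ n`.
-/

section Resolving

variable {V : Type*} {G : SimpleGraph V} {k : ℕ}

lemma kdom_le_card {D : Finset V} (hD : IsKDomSet G k D) : kdom G k ≤ D.card :=
  Nat.sInf_le ⟨D, hD, rfl⟩

lemma le_kdim {m : ℕ} (hex : ∃ R, IsKResSet G k R) (h : ∀ R, IsKResSet G k R → m ≤ R.card) :
    m ≤ kdim G k := by
  obtain ⟨R, hR⟩ := hex
  refine le_csInf ⟨R.card, R, hR, rfl⟩ ?_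
  rintro _ ⟨R', hR', rfl⟩
  exact h R' hR'

lemma isKResSet_univ [Fintype V] (hG : G.Connected) : IsKResSet G k univ := by
  intro x y hxy
  refine ⟨x, mem_univ x, ?_⟩
  have hpos : 0 < G.dist y x := hG.pos_dist_of_ne hxy.symm
  rw [dist_self]
  omega

lemma not_isKResSet_of_dist_eq {R : Finset V} {x y : V} (hxy : x ≠ y)
    (h : ∀ z ∈ R, G.dist x z = G.dist y z) : ¬ IsKResSet G k R := fun hR => by
  obtain ⟨z, hz, hne⟩ := hR x y hxy
  exact hne (by rw [h z hz])

end Resolving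

section Star

variable {V : Type*} {c : V} {k : ℕ}

lemma starGraph_dist_center {x : V} (hx : x ≠ c) : (starGraph c).dist x c = 1 :=
  dist_eq_one_iff_adj.mpr (starGraph_center_adj' (Ne.symm hx))

lemma starGraph_dist_leaves {x y : V} (hx : x ≠ c) (hy : y ≠ c) (hxy : x ≠ y) :
    (starGraph c).dist x y = 2 := by
  have hle : (starGraph c).dist x y ≤ 2 := calc
    (starGraph c).dist x y ≤ (starGraph c).dist x c + (starGraph c).dist c y :=
      (connected_starGraph c).dist_triangle
    _ = 2 := by rw [starGraph_dist_center hx, dist_comm, starGraph_dist_center hy]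
  have hpos : 0 < (starGraph c).dist x y := (connected_starGraph c).pos_dist_of_ne hxy
  have hne_one : (starGraph c).dist x y ≠ 1 := fun h => by
    have := starGraph_adj.mp (dist_eq_one_iff_adj.mp h)
    tauto
  omega

lemma starGraph_dist_eq_of_leaves {x y z : V} (hx : x ≠ c) (hy : y ≠ c) (hzx : z ≠ x)
    (hzy : z ≠ y) : (starGraph c).dist x z = (starGraph c).dist y z := by
  by_cases hz : z = c
  · rw [hz, starGraph_dist_center hx, starGraph_dist_center hy]
  · rw [starGraph_dist_leaves hx hz hzx.symm, starGraph_dist_leaves hy hz hzy.symm]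

lemma kdom_starGraph_le_one (hk : 1 ≤ k) : kdom (starGraph c) k ≤ 1 := by
  refine kdom_le_card (D := {c}) fun u hu => ⟨c, mem_singleton_self c, ?_⟩
  rw [starGraph_dist_center (notMem_singleton.mp hu)]
  exact hk

lemma card_le_of_isKResSet_starGraph [Fintype V] [DecidableEq V] {R : Finset V}
    (hR : IsKResSet (starGraph c) k R) : Fintype.card V - 2 ≤ R.card := by
  have hmissed : (univ.erase c \ R).card ≤ 1 := by
    refine card_le_one.mpr fun x hx y hy => ?_
    simp only [mem_sdiff, mem_erase, mem_univ, and_true] at hx hy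
    by_contra hxy
    refine not_isKResSet_of_dist_eq hxy (fun z hz => ?_) hR
    exact starGraph_dist_eq_of_leaves hx.1 hy.1 (ne_of_mem_of_not_mem hz hx.2)
      (ne_of_mem_of_not_mem hz hy.2)
  have hleaves : (univ.erase c).card ≤ (univ.erase c \ R).card + R.card :=
    card_le_card_sdiff_add_card
  rw [card_erase_of_mem (mem_univ c), card_univ] at hleaves
  omega

lemma le_kdim_starGraph [Fintype V] : Fintype.card V - 2 ≤ kdim (starGraph c) k := by
  classical
  exact le_kdim ⟨univ, isKResSet_univ (connected_starGraph c)⟩ fun _ =>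
    card_le_of_isKResSet_starGraph

end Star

theorem stmt_2_general (k : ℕ) (hk : 1 ≤ k) (M : ℕ) :
    ∃ (n : ℕ) (G : SimpleGraph (Fin n)), 2 ≤ n ∧ G.Connected ∧
      M * kdom G k ≤ kdim G k := by
  refine ⟨M + 2, starGraph (0 : Fin (M + 2)), by omega, connected_starGraph 0, ?_⟩
  calc M * kdom (starGraph (0 : Fin (M + 2))) k
      ≤ M * 1 := Nat.mul_le_mul_left M (kdom_starGraph_le_one hk)
    _ = Fintype.card (Fin (M + 2)) - 2 := by simp
    _ ≤ kdim (starGraph 0) k := le_kdim_starGraph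

/-- For every positive integer `k` and every positive integer `M`, there exists a finite
simple connected graph `G` (with at least 2 vertices) with `dim_k(G) ≥ M · γ_k(G)`. -/
theorem stmt_2 (k : ℕ) (hk : 1 ≤ k) (M : ℕ) (hM : 1 ≤ M) :
    ∃ (n : ℕ) (G : SimpleGraph (Fin n)), 2 ≤ n ∧ G.Connected ∧
      M * kdom G k ≤ kdim G k :=
  stmt_2_general k hk M
end

section
/- For every tree T of order n ≥ 2 and every positive integer k, γ_L^k(T) ≤ n − ex(T), where ex(T) is the number of exterior major vertices of T. -/
open SimpleGraph Finset

/-- The degree of a vertex. -/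
noncomputable def deg {V : Type*} (G : SimpleGraph V) (v : V) : ℕ :=
  Nat.card {u : V // G.Adj v u}

/-- A leaf is a vertex of degree one. -/
def IsLeafVtx {V : Type*} (G : SimpleGraph V) (v : V) : Prop := deg G v = 1

/-- A major vertex is a vertex of degree at least three. -/
def IsMajorVtx {V : Type*} (G : SimpleGraph V) (v : V) : Prop := 3 ≤ deg G v

/-- A leaf `l` is a terminal vertex of a major vertex `v` if `d(l,v) < d(l,w)` for
every other major vertex `w`. -/
def IsTerminalOf {V : Type*} (G : SimpleGraph V) (l v : V) : Prop :=
  IsLeafVtx G l ∧ IsMajorVtx G v ∧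
    ∀ w : V, IsMajorVtx G w → w ≠ v → G.dist l v < G.dist l w

/-- An exterior major vertex is a major vertex having at least one terminal vertex. -/
def IsExteriorMajor {V : Type*} (G : SimpleGraph V) (v : V) : Prop :=
  IsMajorVtx G v ∧ ∃ l : V, IsTerminalOf G l v

/-- `ex(G)`: the number of exterior major vertices. -/
noncomputable def exMaj {V : Type*} (G : SimpleGraph V) : ℕ :=
  Nat.card {v : V // IsExteriorMajor G v}

/-- `σ(G)`: the number of leaves. -/
noncomputable def numLeaves {V : Type*} (G : SimpleGraph V) : ℕ :=
  Nat.card {v : V // IsLeafVtx G v}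

/-
Let `S` be the set of vertices that are not exterior major. For an exterior major vertex `u`
with terminal leaf `ℓ`, the first step `z` on the geodesic from `u` to `ℓ` is not major, and
every other major vertex `y` is farther from `ℓ` than `u`, hence at distance at least `2`
from `z`. So `z ∈ S` dominates `u` and separates `u` (at distance `1`) from every other
exterior major vertex; vertices of `S` separate themselves. Thus `S` is a distance-`k`
locating-dominating set of size `n - ex(T)`.
-/

namespace SimpleGraph

variable {V : Type*} {G : SimpleGraph V}

lemma Reachable.exists_adj_dist_lt {u v : V} (h : G.Reachable u v) (hne : u ≠ v) :
    ∃ z, G.Adj u z ∧ G.dist z v < G.dist u v := by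
  obtain ⟨p, hp⟩ := h.exists_walk_length_eq_dist
  cases p with
  | nil => exact absurd rfl hne
  | cons hadj q =>
    refine ⟨_, hadj, ?_⟩
    have := dist_le q
    simp only [Walk.length_cons] at hp
    omega

lemma IsExteriorMajor.exists_adj_forall_isMajorVtx_two_le_dist (hG : G.Connected) {u : V}
    (hu : IsExteriorMajor G u) :
    ∃ z, ¬ IsMajorVtx G z ∧ G.Adj u z ∧ ∀ y, IsMajorVtx G y → y ≠ u → 2 ≤ G.dist y z := by
  obtain ⟨hmaj, l, hleaf, -, hterm⟩ := hu
  have hul : u ≠ l := by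
    rintro rfl
    unfold IsMajorVtx at hmaj
    unfold IsLeafVtx at hleaf
    omega
  obtain ⟨z, hadj, hz⟩ := (hG.preconnected u l).exists_adj_dist_lt hul
  rw [dist_comm, dist_comm (u := u)] at hz
  have hfar : ∀ y, IsMajorVtx G y → y ≠ u → 2 ≤ G.dist y z := fun y hy hyu => by
    have h1 := hterm y hy hyu
    have h2 : G.dist l y ≤ G.dist l z + G.dist z y := hG.dist_triangle
    rw [dist_comm (u := z)] at h2
    omega
  refine ⟨z, fun hzmaj => ?_, hadj, hfar⟩
  have := hfar z hzmaj hadj.ne.symm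
  rw [dist_self] at this
  omega

variable {S : Finset V} {k : ℕ}

lemma isKDomSet_of_forall_notMem_exists_adj (hk : 1 ≤ k)
    (hS : ∀ u ∉ S, ∃ z ∈ S, G.Adj u z) : IsKDomSet G k S := fun u hu => by
  obtain ⟨z, hzS, hadj⟩ := hS u hu
  exact ⟨z, hzS, by rw [dist_eq_one_iff_adj.mpr hadj]; exact hk⟩

lemma isKResSet_of_forall_notMem_exists_adj_two_le_dist (hG : G.Connected) (hk : 1 ≤ k)
    (hS : ∀ u ∉ S, ∃ z ∈ S, G.Adj u z ∧ ∀ y ∉ S, y ≠ u → 2 ≤ G.dist y z) :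
    IsKResSet G k S := by
  have separate_of_mem : ∀ x y, x ≠ y → x ∈ S →
      ∃ z ∈ S, min (G.dist x z) (k + 1) ≠ min (G.dist y z) (k + 1) := fun x y hxy hx => by
    have := hG.pos_dist_of_ne hxy.symm
    exact ⟨x, hx, by rw [dist_self]; omega⟩
  intro x y hxy
  by_cases hx : x ∈ S
  · exact separate_of_mem x y hxy hx
  by_cases hy : y ∈ S
  · obtain ⟨z, hzS, hz⟩ := separate_of_mem y x hxy.symm hy
    exact ⟨z, hzS, hz.symm⟩
  obtain ⟨z, hzS, hadj, hfar⟩ := hS x hx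
  have := hfar y hy hxy.symm
  exact ⟨z, hzS, by rw [dist_eq_one_iff_adj.mpr hadj]; omega⟩

lemma kld_le_card (hdom : IsKDomSet G k S) (hres : IsKResSet G k S) : kld G k ≤ S.card :=
  Nat.sInf_le ⟨S, hdom, hres, rfl⟩

end SimpleGraph

theorem stmt_12_general {V : Type*} [Fintype V] (T : SimpleGraph V) (hT : T.IsTree)
    (k : ℕ) (hk : 1 ≤ k) :
    kld T k ≤ Fintype.card V - exMaj T := by
  classical
  have hconn := hT.connected
  let S : Finset V := {v | ¬ IsExteriorMajor T v}
  have hS : ∀ u ∉ S, ∃ z ∈ S, T.Adj u z ∧ ∀ y ∉ S, y ≠ u → 2 ≤ T.dist y z := fun u hu => by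
    simp only [S, Finset.mem_filter, Finset.mem_univ, true_and, not_not] at hu ⊢
    obtain ⟨z, hz, hadj, hfar⟩ := hu.exists_adj_forall_isMajorVtx_two_le_dist hconn
    exact ⟨z, fun hzext => hz hzext.1, hadj, fun y hy => hfar y hy.1⟩
  have hcard : S.card = Fintype.card V - exMaj T := by
    rw [← Fintype.card_subtype, Fintype.card_subtype_compl, exMaj,
      Nat.card_eq_fintype_card]
  have hdom : IsKDomSet T k S := isKDomSet_of_forall_notMem_exists_adj hk
    fun u hu => (hS u hu).imp fun _ ⟨hzS, hadj, _⟩ => ⟨hzS, hadj⟩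
  have hres := isKResSet_of_forall_notMem_exists_adj_two_le_dist hconn hk hS
  exact hcard ▸ kld_le_card hdom hres

/-- For every tree `T` of order `n ≥ 2` and positive integer `k`,
`γ_L^k(T) ≤ n - ex(T)`. -/
theorem stmt_12 {V : Type*} [Fintype V] (T : SimpleGraph V) (hT : T.IsTree)
    (hn : 2 ≤ Fintype.card V) (k : ℕ) (hk : 1 ≤ k) :
    kld T k ≤ Fintype.card V - exMaj T :=
  stmt_12_general T hT k hk
end
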